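/- arXiv:1212.2696 — 6 statements merged into one kernel-verified Lean document; each statement's English description precedes it below -/
import Mathlib

section
/- Let C_1,...,C_r be a partition of a finite probability space with P(C_j) > 0 for all j, and let u(C_1),...,u(C_r) ≥ 0 be weights. Suppose an answer is given by nonnegative coefficients p_{kj} (k = 1,...,m, j = 1,...,r) with Σ_j p_{kj} = 1 for each k, and probabilities v_k ≥ 0 with Σ_k v_k = 1, satisfying the consistency condition Σ_k v_k p_{kj} = P(C_j) for all j. Define the answer depth Y = Σ_k v_k Σ_j u(C_j) p_{kj} log(p_{kj}/P(C_j)) and the question difficulty G = Σ_j u(C_j) P(C_j) log(1/P(C_j)). Then Y ≤ G. -/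
open Real Finset

/-- Depth–difficulty inequality for complete questions:
the answer depth never exceeds the question difficulty. -/
theorem answer_depth_le_difficulty
    (r m : ℕ) (P u : Fin r → ℝ) (p : Fin m → Fin r → ℝ) (v : Fin m → ℝ)
    (hP : ∀ j, 0 < P j) (hPsum : ∑ j, P j = 1)
    (hu : ∀ j, 0 ≤ u j)
    (hp : ∀ k j, 0 ≤ p k j) (hprow : ∀ k, ∑ j, p k j = 1)
    (hv : ∀ k, 0 ≤ v k) (hvsum : ∑ k, v k = 1)
    (hcons : ∀ j, ∑ k, v k * p k j = P j) :
    (∑ k, v k * ∑ j, u j * p k j * Real.log (p k j / P j)) ≤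
      ∑ j, u j * P j * Real.log (1 / P j) := by
  have hswap : (∑ k, v k * ∑ j, u j * p k j * Real.log (p k j / P j))
      = ∑ j, ∑ k, v k * (u j * p k j * Real.log (p k j / P j)) := by
    simp_rw [Finset.mul_sum]
    exact Finset.sum_comm
  rw [hswap]
  apply Finset.sum_le_sum
  intro j _
  have key : ∀ k, v k * (u j * p k j * Real.log (p k j / P j))
      ≤ v k * (u j * (p k j * Real.log (1 / P j))) := by
    intro k
    rcases eq_or_lt_of_le (hp k j) with h0 | h0
    · simp [← h0]
    · have hple : p k j ≤ 1 := by
        rw [← hprow k]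
        exact Finset.single_le_sum (fun i _ => hp k i) (Finset.mem_univ j)
      have hlog : Real.log (p k j / P j) ≤ Real.log (1 / P j) := by
        apply Real.log_le_log (div_pos h0 (hP j))
        gcongr
        exact (hP j).le
      have hmul := mul_le_mul_of_nonneg_left hlog
        (mul_nonneg (mul_nonneg (hv k) (hu j)) (hp k j))
      nlinarith [hmul]
  calc ∑ k, v k * (u j * p k j * Real.log (p k j / P j))
      ≤ ∑ k, v k * (u j * (p k j * Real.log (1 / P j))) :=
        Finset.sum_le_sum fun k _ => key k
    _ = u j * P j * Real.log (1 / P j) := by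
        have : ∀ k, v k * (u j * (p k j * Real.log (1 / P j)))
            = u j * Real.log (1 / P j) * (v k * p k j) := fun k => by ring
        simp_rw [this]
        rw [← Finset.mul_sum, hcons j]; ring
end

section
/- With the setup of the consistency condition Σ_k v_k p_{kj} = P(C_j) (all v_k > 0, Σ_j p_{kj} = 1, P(C_j) > 0, u(C_j) > 0 for all j), the answer depth Y = Σ_k v_k Σ_j u(C_j) p_{kj} log(p_{kj}/P(C_j)) equals the difficulty G = −Σ_j u(C_j) P(C_j) log P(C_j) if and only if for every k there is an index f(k) with p_{kj} = δ_{f(k),j} for all j (i.e. each message value determines one cell with certainty). -/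
open Real Finset

/-- Equality case of the depth–difficulty inequality: depth equals difficulty
iff each message value determines one cell with certainty. -/
theorem answer_depth_eq_difficulty_iff_perfect
    (r m : ℕ) (P u : Fin r → ℝ) (p : Fin m → Fin r → ℝ) (v : Fin m → ℝ)
    (hP : ∀ j, 0 < P j) (hPsum : ∑ j, P j = 1)
    (hu : ∀ j, 0 < u j)
    (hp : ∀ k j, 0 ≤ p k j) (hprow : ∀ k, ∑ j, p k j = 1)
    (hv : ∀ k, 0 < v k) (hvsum : ∑ k, v k = 1)
    (hcons : ∀ j, ∑ k, v k * p k j = P j) :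
    (∑ k, v k * ∑ j, u j * p k j * Real.log (p k j / P j)) =
      -∑ j, u j * P j * Real.log (P j) ↔
    ∀ k, ∃ f : Fin r, ∀ j, p k j = if f = j then 1 else 0 := by
  have hp1 : ∀ k j, p k j ≤ 1 := by
    intro k j
    calc p k j ≤ ∑ j', p k j' :=
          Finset.single_le_sum (fun i _ => hp k i) (Finset.mem_univ j)
      _ = 1 := hprow k
  have hterm : ∀ k j, p k j * Real.log (p k j) ≤ 0 := fun k j =>
    mul_nonpos_of_nonneg_of_nonpos (hp k j) (Real.log_nonpos (hp k j) (hp1 k j))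
  have hsplit : ∀ k j, u j * p k j * Real.log (p k j / P j)
      = u j * (p k j * Real.log (p k j)) - u j * p k j * Real.log (P j) := by
    intro k j
    rcases eq_or_lt_of_le (hp k j) with h | h
    · simp [← h]
    · rw [Real.log_div h.ne' (hP j).ne']; ring
  have key : (∑ k, v k * ∑ j, u j * p k j * Real.log (p k j / P j))
      = (∑ k, ∑ j, v k * (u j * (p k j * Real.log (p k j))))
        - ∑ j, u j * P j * Real.log (P j) := by
    have h1 : ∀ k, v k * ∑ j, u j * p k j * Real.log (p k j / P j)
        = (∑ j, v k * (u j * (p k j * Real.log (p k j))))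
          - ∑ j, v k * (u j * p k j * Real.log (P j)) := by
      intro k
      rw [Finset.mul_sum, ← Finset.sum_sub_distrib]
      refine Finset.sum_congr rfl fun j _ => ?_
      rw [hsplit k j]; ring
    rw [Finset.sum_congr rfl (fun k _ => h1 k), Finset.sum_sub_distrib]
    congr 1
    rw [Finset.sum_comm]
    refine Finset.sum_congr rfl fun j _ => ?_
    have h2 : ∑ k, v k * (u j * p k j * Real.log (P j))
        = (u j * Real.log (P j)) * ∑ k, v k * p k j := by
      rw [Finset.mul_sum]
      refine Finset.sum_congr rfl fun k _ => ?_
      ring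
    rw [h2, hcons j]; ring
  rw [key]
  have hnonpos : ∀ k j, v k * (u j * (p k j * Real.log (p k j))) ≤ 0 := fun k j =>
    mul_nonpos_of_nonneg_of_nonpos (hv k).le
      (mul_nonpos_of_nonneg_of_nonpos (hu j).le (hterm k j))
  constructor
  · intro h
    have hzero : (∑ k, ∑ j, v k * (u j * (p k j * Real.log (p k j)))) = 0 := by linarith
    have hkzero : ∀ k ∈ Finset.univ, ∑ j, v k * (u j * (p k j * Real.log (p k j))) = 0 :=
      (Finset.sum_eq_zero_iff_of_nonpos
        (fun k _ => Finset.sum_nonpos (fun j _ => hnonpos k j))).mp hzero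
    intro k
    have hjzero : ∀ j ∈ Finset.univ, v k * (u j * (p k j * Real.log (p k j))) = 0 :=
      (Finset.sum_eq_zero_iff_of_nonpos (fun j _ => hnonpos k j)).mp
        (hkzero k (Finset.mem_univ k))
    have h01 : ∀ j, p k j = 0 ∨ p k j = 1 := by
      intro j
      have := hjzero j (Finset.mem_univ j)
      have hpl : p k j * Real.log (p k j) = 0 := by
        have hne : v k * u j ≠ 0 := (mul_pos (hv k) (hu j)).ne'
        have : v k * u j * (p k j * Real.log (p k j)) = 0 := by linarith [this]
        exact (mul_eq_zero.mp this).resolve_left hne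
      rcases mul_eq_zero.mp hpl with h0 | hl
      · exact Or.inl h0
      · rcases Real.log_eq_zero.mp hl with h0 | h1 | hm
        · exact Or.inl h0
        · exact Or.inr h1
        · exact absurd hm (by linarith [hp k j])
    -- find the index with p k f ≠ 0
    have hne : ∃ f, p k f ≠ 0 := by
      by_contra hall
      push_neg at hall
      have : ∑ j, p k j = 0 := Finset.sum_eq_zero fun j _ => hall j
      rw [hprow k] at this; norm_num at this
    obtain ⟨f, hf⟩ := hne
    have hpf : p k f = 1 := (h01 f).resolve_left hf
    refine ⟨f, fun j => ?_⟩
    by_cases hfj : f = j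
    · simp [← hfj, hpf]
    · simp only [if_neg hfj]
      have hsum : ∑ j' ∈ Finset.univ.erase f, p k j' = 0 := by
        have := Finset.add_sum_erase Finset.univ (p k) (Finset.mem_univ f)
        rw [hprow k, hpf] at this
        linarith
      exact (Finset.sum_eq_zero_iff_of_nonneg (fun j' _ => hp k j')).mp hsum j
        (Finset.mem_erase.mpr ⟨Ne.symm hfj, Finset.mem_univ j⟩)
  · intro h
    have hzero : (∑ k, ∑ j, v k * (u j * (p k j * Real.log (p k j)))) = 0 := by
      refine Finset.sum_eq_zero fun k _ => Finset.sum_eq_zero fun j _ => ?_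
      obtain ⟨f, hf⟩ := h k
      by_cases hfj : f = j
      · rw [hf j, if_pos hfj]; simp
      · rw [hf j, if_neg hfj]; simp
    rw [hzero]; ring
end

section
/- Let f: (0,1] × (0,1] → ℝ be continuous and satisfy the functional equation f(p'', q'') = f(p, q) + f(p''/p, q''/q) whenever 0 < p'' ≤ p ≤ 1 and 0 < q'' ≤ q ≤ 1, together with f(p, p) = 0 for all p and f(p,q) > 0 whenever q > p. Then there is a constant c > 0 such that f(p, q) = c·log(q/p) for all p, q ∈ (0,1]. -/
open Real Set

lemma cauchy_log_aux (g : ℝ → ℝ) (hc : ContinuousOn g (Set.Ioc 0 1))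
    (hadd : ∀ x y : ℝ, 0 < x → x ≤ 1 → 0 < y → y ≤ 1 → g (x * y) = g x + g y) :
    ∃ a : ℝ, ∀ p : ℝ, 0 < p → p ≤ 1 → g p = a * Real.log p := by
  set G : ℝ → ℝ := fun t => g (Real.exp (-t)) with hG
  have Gadd : ∀ s t : ℝ, 0 ≤ s → 0 ≤ t → G (s + t) = G s + G t := by
    intro s t hs ht
    have h : Real.exp (-(s + t)) = Real.exp (-s) * Real.exp (-t) := by
      rw [← Real.exp_add]; ring_nf
    simp only [hG, h]
    exact hadd _ _ (Real.exp_pos _) (Real.exp_le_one_iff.mpr (by linarith))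
      (Real.exp_pos _) (Real.exp_le_one_iff.mpr (by linarith))
  have GN : ∀ t : ℝ, 0 ≤ t → ∀ n : ℕ, G (t + n) = G t + n * G 1 := by
    intro t ht n
    induction n with
    | zero => simp
    | succ n ih =>
      have h1 : t + ((n + 1 : ℕ) : ℝ) = (t + n) + 1 := by push_cast; ring
      rw [h1, Gadd (t + n) 1 (by positivity) zero_le_one, ih]
      push_cast; ring
  set F : ℝ → ℝ := fun t => G (t + ⌈-t⌉₊) - (⌈-t⌉₊ : ℝ) * G 1 with hF
  have Felim : ∀ (t : ℝ) (n : ℕ), 0 ≤ t + n → F t = G (t + n) - (n : ℝ) * G 1 := by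
    intro t n hn
    have hm : 0 ≤ t + (⌈-t⌉₊ : ℝ) := by
      have := Nat.le_ceil (-t); linarith
    have h1 : G ((t + n) + (⌈-t⌉₊ : ℕ)) = G (t + n) + (⌈-t⌉₊ : ℝ) * G 1 := GN _ hn _
    have h2 : G ((t + (⌈-t⌉₊ : ℝ)) + ((n : ℕ) : ℝ)) = G (t + ⌈-t⌉₊) + (n : ℝ) * G 1 := GN _ hm _
    have h3 : (t + n) + ((⌈-t⌉₊ : ℕ) : ℝ) = (t + (⌈-t⌉₊ : ℝ)) + ((n : ℕ) : ℝ) := by ring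
    rw [h3, h2] at h1
    simp only [hF]
    linarith
  have Fadd : ∀ s t : ℝ, F (s + t) = F s + F t := by
    intro s t
    have hs : 0 ≤ s + (⌈-s⌉₊ : ℝ) := by have := Nat.le_ceil (-s); linarith
    have ht : 0 ≤ t + (⌈-t⌉₊ : ℝ) := by have := Nat.le_ceil (-t); linarith
    have h1 : F (s + t) = G (s + t + ((⌈-s⌉₊ + ⌈-t⌉₊ : ℕ) : ℝ)) - ((⌈-s⌉₊ + ⌈-t⌉₊ : ℕ) : ℝ) * G 1 :=
      Felim (s + t) (⌈-s⌉₊ + ⌈-t⌉₊) (by push_cast; linarith)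
    have h2 : s + t + ((⌈-s⌉₊ + ⌈-t⌉₊ : ℕ) : ℝ) = (s + (⌈-s⌉₊ : ℝ)) + (t + (⌈-t⌉₊ : ℝ)) := by
      push_cast; ring
    rw [h2, Gadd _ _ hs ht] at h1
    have hFs : F s = G (s + ⌈-s⌉₊) - (⌈-s⌉₊ : ℝ) * G 1 := rfl
    have hFt : F t = G (t + ⌈-t⌉₊) - (⌈-t⌉₊ : ℝ) * G 1 := rfl
    rw [h1, hFs, hFt]; push_cast; ring
  have Gcont : ContinuousOn G (Set.Ici 0) := by
    apply hc.comp ((Real.continuous_exp.comp continuous_neg).continuousOn)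
    intro t ht
    exact ⟨Real.exp_pos _, Real.exp_le_one_iff.mpr (by simpa using ht)⟩
  have Fcont : Continuous F := by
    rw [continuous_iff_continuousAt]
    intro t₀
    set n : ℕ := ⌈-t₀⌉₊ + 1 with hn
    have hposn : 0 < t₀ + (n : ℝ) := by
      have := Nat.le_ceil (-t₀); push_cast [hn]; linarith
    have hev : ∀ᶠ t in nhds t₀, F t = G (t + n) - (n : ℝ) * G 1 := by
      have h1 : ∀ᶠ t in nhds t₀, -(n : ℝ) < t := eventually_gt_nhds (by linarith)
      filter_upwards [h1] with t ht
      exact Felim t n (by linarith)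
    have hGat : ContinuousAt G (t₀ + n) := Gcont.continuousAt (Ici_mem_nhds hposn)
    have hcomp : ContinuousAt (fun t => G (t + (n : ℝ)) - (n : ℝ) * G 1) t₀ := by
      have hadd' : ContinuousAt (fun t : ℝ => t + (n : ℝ)) t₀ := by fun_prop
      have h4 : ContinuousAt (G ∘ (fun t : ℝ => t + (n : ℝ))) t₀ := ContinuousAt.comp hGat hadd'
      exact ContinuousAt.sub h4 continuousAt_const
    exact hcomp.congr (Filter.EventuallyEq.symm hev)
  have Flin : ∀ t : ℝ, F t = t * F 1 := by
    intro t
    have := map_real_smul (AddMonoidHom.mk' F Fadd) Fcont t 1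
    simpa [smul_eq_mul] using this
  refine ⟨-F 1, fun p hp hp1 => ?_⟩
  have hlog : Real.log p ≤ 0 := Real.log_nonpos hp.le hp1
  have hGF : G (-Real.log p) = F (-Real.log p) := by
    have := Felim (-Real.log p) 0 (by simpa using neg_nonneg.mpr hlog)
    simpa using this.symm
  have hgp : g p = G (-Real.log p) := by
    simp only [hG, neg_neg, Real.exp_log hp]
  rw [hgp, hGF, Flin]; ring

/-- The functional-equation step in the derivation of conditional answer depth:
a continuous two-variable function satisfying the sequential decomposition
equation and the correct-direction sign conditions must be `c · log (q/p)`. -/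
theorem depth_functional_equation
    (f : ℝ → ℝ → ℝ)
    (hcont : ContinuousOn (fun x : ℝ × ℝ => f x.1 x.2) (Set.Ioc 0 1 ×ˢ Set.Ioc 0 1))
    (hfe : ∀ p q p'' q'' : ℝ, 0 < p'' → p'' ≤ p → p ≤ 1 → 0 < q'' → q'' ≤ q → q ≤ 1 →
      f p'' q'' = f p q + f (p'' / p) (q'' / q))
    (hdiag : ∀ p : ℝ, 0 < p → p ≤ 1 → f p p = 0)
    (hpos : ∀ p q : ℝ, 0 < p → p ≤ 1 → 0 < q → q ≤ 1 → p < q → 0 < f p q) :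
    ∃ c : ℝ, 0 < c ∧ ∀ p q : ℝ, 0 < p → p ≤ 1 → 0 < q → q ≤ 1 →
      f p q = c * Real.log (q / p) := by
  -- splitting
  have hsplit : ∀ p q : ℝ, 0 < p → p ≤ 1 → 0 < q → q ≤ 1 → f p q = f p 1 + f 1 q := by
    intro p q hp hp1 hq hq1
    have h := hfe p 1 p q hp le_rfl hp1 hq hq1 le_rfl
    rwa [div_self hp.ne', div_one] at h
  -- additivity of g := f · 1
  have g_add : ∀ x y : ℝ, 0 < x → x ≤ 1 → 0 < y → y ≤ 1 → f (x * y) 1 = f x 1 + f y 1 := by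
    intro x y hx hx1 hy hy1
    have h := hfe x 1 (x * y) 1 (by positivity) (by nlinarith) hx1 one_pos le_rfl le_rfl
    have hxy : x * y / x = y := by field_simp
    rwa [hxy, div_one] at h
  -- additivity of h := f 1 ·
  have h_add : ∀ x y : ℝ, 0 < x → x ≤ 1 → 0 < y → y ≤ 1 → f 1 (x * y) = f 1 x + f 1 y := by
    intro x y hx hx1 hy hy1
    have h := hfe 1 x 1 (x * y) one_pos le_rfl le_rfl (by positivity) (by nlinarith) hx1
    have hxy : x * y / x = y := by field_simp
    rwa [hxy, div_one] at h
  -- continuity of the slices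
  have gcont : ContinuousOn (fun x : ℝ => f x 1) (Set.Ioc 0 1) := by
    have hmap : Set.MapsTo (fun x : ℝ => ((x, 1) : ℝ × ℝ)) (Set.Ioc 0 1)
        (Set.Ioc 0 1 ×ˢ Set.Ioc 0 1) := fun x hx => ⟨hx, ⟨one_pos, le_rfl⟩⟩
    exact hcont.comp ((continuous_id.prodMk continuous_const).continuousOn) hmap
  have hcont' : ContinuousOn (fun y : ℝ => f 1 y) (Set.Ioc 0 1) := by
    have hmap : Set.MapsTo (fun y : ℝ => ((1, y) : ℝ × ℝ)) (Set.Ioc 0 1)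
        (Set.Ioc 0 1 ×ˢ Set.Ioc 0 1) := fun y hy => ⟨⟨one_pos, le_rfl⟩, hy⟩
    exact hcont.comp ((continuous_const.prodMk continuous_id).continuousOn) hmap
  obtain ⟨a, ha⟩ := cauchy_log_aux (fun x => f x 1) gcont g_add
  obtain ⟨b, hb⟩ := cauchy_log_aux (fun y => f 1 y) hcont' h_add
  -- the diagonal condition forces b = -a
  have hexp : (0 : ℝ) < Real.exp (-1) := Real.exp_pos _
  have hexp1 : Real.exp (-1) ≤ 1 := Real.exp_le_one_iff.mpr (by norm_num)
  have hdiag1 : a + b = 0 := by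
    have h1 := hdiag (Real.exp (-1)) hexp hexp1
    rw [hsplit _ _ hexp hexp1 hexp hexp1, ha _ hexp hexp1, hb _ hexp hexp1,
      Real.log_exp] at h1
    linarith
  have hb' : b = -a := by linarith
  -- positivity
  have half_pos : (0 : ℝ) < 1 / 2 := by norm_num
  have half_le : (1 : ℝ) / 2 ≤ 1 := by norm_num
  have hfp := hpos (1 / 2) 1 half_pos half_le one_pos le_rfl (by norm_num)
  have hval : f (1 / 2) 1 = a * Real.log (1 / 2) := ha _ half_pos half_le
  have hlog_half : Real.log ((1 : ℝ) / 2) < 0 := by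
    apply Real.log_neg <;> norm_num
  have ha_neg : a < 0 := by nlinarith [hval ▸ hfp]
  refine ⟨-a, by linarith, fun p q hp hp1 hq hq1 => ?_⟩
  rw [hsplit p q hp hp1 hq hq1, ha _ hp hp1, hb _ hq hq1, hb',
    Real.log_div hq.ne' hp.ne']
  ring
end

section
/- Let V(C') be an answer to partition C' with message probabilities v'_k and updated measures P'^k given by P'^k(C'_l ∩ C''_j) = p'_{kl} P(C'_l ∩ C''_j)/P(C'_l), subject to the consistency condition Σ_k v'_k p'_{kl} = P(C'_l). Then the conditional difficulty G(C'' | V(C')) := Σ_k v'_k [−Σ_j u-weighted P'^k(C''_j) log P'^k(C''_j)], with cell weights u taken from the joint partition, equals G(C'') − Y_rel, where the relative depth is Y_rel = Σ_k v'_k Σ_{l,j} u(C'_l∩C''_j) P'^k(C'_l∩C''_j) log( P'^k(C''_j)/P(C''_j) ). -/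
open Real Finset

/-- The conditional difficulty of question `C''` given an answer to `C'`
equals the unconditional difficulty minus the relative depth. -/
theorem conditional_difficulty_eq_difficulty_sub_relative_depth
    (r' r'' m' : ℕ) (Pj u : Fin r' × Fin r'' → ℝ)
    (hPj : ∀ lj, 0 < Pj lj) (hPsum : ∑ lj, Pj lj = 1)
    (hu : ∀ lj, 0 ≤ u lj)
    (P' : Fin r' → ℝ) (P'' : Fin r'' → ℝ)
    (hP' : ∀ l, P' l = ∑ j, Pj (l, j))
    (hP'' : ∀ j, P'' j = ∑ l, Pj (l, j))
    (p' : Fin m' → Fin r' → ℝ) (v' : Fin m' → ℝ)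
    (hp' : ∀ k l, 0 ≤ p' k l) (hrow : ∀ k, ∑ l, p' k l = 1)
    (hv' : ∀ k, 0 ≤ v' k) (hvsum : ∑ k, v' k = 1)
    (hcons : ∀ l, ∑ k, v' k * p' k l = P' l)
    -- updated measures
    (Pk : Fin m' → Fin r' × Fin r'' → ℝ)
    (hPk : ∀ k lj, Pk k lj = p' k lj.1 * Pj lj / P' lj.1)
    (Pk'' : Fin m' → Fin r'' → ℝ)
    (hPk'' : ∀ k j, Pk'' k j = ∑ l, p' k l * Pj (l, j) / P' l) :
    (∑ k, v' k * (-∑ j, ∑ l, u (l, j) * Pk k (l, j) * Real.log (Pk'' k j))) =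
      (-∑ j, ∑ l, u (l, j) * Pj (l, j) * Real.log (P'' j)) -
      ∑ k, v' k * ∑ l, ∑ j, u (l, j) * Pk k (l, j) * Real.log (Pk'' k j / P'' j) := by
  -- nonemptiness
  have hne : Nonempty (Fin r' × Fin r'') := by
    by_contra h
    rw [not_nonempty_iff] at h
    rw [Finset.univ_eq_empty, Finset.sum_empty] at hPsum
    norm_num at hPsum
  haveI : Nonempty (Fin r') := ⟨(Classical.choice hne).1⟩
  haveI : Nonempty (Fin r'') := ⟨(Classical.choice hne).2⟩
  have hP'pos : ∀ l, 0 < P' l := fun l => by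
    rw [hP' l]; exact Finset.sum_pos (fun j _ => hPj _) Finset.univ_nonempty
  have hP''pos : ∀ j, 0 < P'' j := fun j => by
    rw [hP'' j]; exact Finset.sum_pos (fun l _ => hPj _) Finset.univ_nonempty
  have hPk''pos : ∀ k j, 0 < Pk'' k j := by
    intro k j
    rw [hPk'' k j]
    obtain ⟨l0, hl0⟩ : ∃ l, 0 < p' k l := by
      by_contra h
      push_neg at h
      have : ∑ l, p' k l = 0 :=
        Finset.sum_eq_zero fun l _ => le_antisymm (h l) (hp' k l)
      rw [hrow k] at this; norm_num at this
    refine Finset.sum_pos' (fun l _ => ?_) ⟨l0, Finset.mem_univ _, ?_⟩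
    · exact div_nonneg (mul_nonneg (hp' k l) (hPj _).le) (hP'pos l).le
    · exact div_pos (mul_pos hl0 (hPj _)) (hP'pos l0)
  have hlog : ∀ k j, Real.log (Pk'' k j / P'' j)
      = Real.log (Pk'' k j) - Real.log (P'' j) :=
    fun k j => Real.log_div (hPk''pos k j).ne' (hP''pos j).ne'
  have hPksum : ∀ l j, ∑ k, v' k * Pk k (l, j) = Pj (l, j) := by
    intro l j
    simp only [hPk]
    have h1 : ∀ k, v' k * (p' k (l, j).1 * Pj (l, j) / P' (l, j).1)
        = v' k * p' k l * (Pj (l, j) / P' l) := fun k => by ring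
    rw [Finset.sum_congr rfl fun k _ => h1 k, ← Finset.sum_mul, hcons,
      mul_div_cancel₀ _ (hP'pos l).ne']
  -- abbreviations
  set A : Fin m' → ℝ := fun k => ∑ j, ∑ l, u (l, j) * Pk k (l, j) * Real.log (Pk'' k j) with hA
  have hsplit : ∀ k, ∑ l, ∑ j, u (l, j) * Pk k (l, j) * Real.log (Pk'' k j / P'' j)
      = A k - ∑ l, ∑ j, u (l, j) * Pk k (l, j) * Real.log (P'' j) := by
    intro k
    simp only [hlog, mul_sub, Finset.sum_sub_distrib, hA]
    rw [Finset.sum_comm]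
  have hB : ∑ k, v' k * ∑ l, ∑ j, u (l, j) * Pk k (l, j) * Real.log (P'' j)
      = ∑ j, ∑ l, u (l, j) * Pj (l, j) * Real.log (P'' j) := by
    simp only [Finset.mul_sum]
    rw [Finset.sum_comm]
    rw [show (∑ j, ∑ l, u (l, j) * Pj (l, j) * Real.log (P'' j))
        = ∑ l, ∑ j, u (l, j) * Pj (l, j) * Real.log (P'' j) from Finset.sum_comm]
    refine Finset.sum_congr rfl fun l _ => ?_
    rw [Finset.sum_comm]
    refine Finset.sum_congr rfl fun j _ => ?_
    have h1 : ∀ k, v' k * (u (l, j) * Pk k (l, j) * Real.log (P'' j))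
        = v' k * Pk k (l, j) * (u (l, j) * Real.log (P'' j)) := fun k => by ring
    rw [Finset.sum_congr rfl fun k _ => h1 k, ← Finset.sum_mul, hPksum]
    ring
  calc ∑ k, v' k * (-A k) = -∑ k, v' k * A k := by
        simp [mul_neg, Finset.sum_neg_distrib]
    _ = (-∑ j, ∑ l, u (l, j) * Pj (l, j) * Real.log (P'' j)) -
      ∑ k, v' k * ∑ l, ∑ j, u (l, j) * Pk k (l, j) * Real.log (Pk'' k j / P'' j) := by
        simp only [hsplit, mul_sub, Finset.sum_sub_distrib, hB]
        ring
end

section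
/- A message updating P to measures P^k of the form P^k = Σ_j p_{kj} P_{C_j} (with p_{kj} ≥ 0, Σ_j p_{kj} = 1, where P_{C_j} is P conditioned on C_j) satisfies, for every k and j: either P^k(C_j) = 0 or the conditional measure P^k_{C_j} equals P_{C_j}. Conversely, any family of measures P^k each satisfying this condition for all j is of this form. -/
open Real Finset

/-- Characterization of valid answers: the updated measures `P^k` are mixtures
of the conditional measures `P_{C_j}` if and only if each `P^k` either
annihilates a cell or leaves the conditional measure within the cell unchanged. -/
theorem answer_characterization
    (n r : ℕ) (c : Fin n → Fin r) (P : Fin n → ℝ)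
    (hP : ∀ ω, 0 ≤ P ω) (hPsum : ∑ ω, P ω = 1)
    (PC : Fin r → ℝ) (hPC : ∀ j, PC j = ∑ ω ∈ Finset.univ.filter (fun ω => c ω = j), P ω)
    (hPCpos : ∀ j, 0 < PC j)
    (m : ℕ) (Pk : Fin m → Fin n → ℝ)
    (hPknn : ∀ k ω, 0 ≤ Pk k ω) (hPksum : ∀ k, ∑ ω, Pk k ω = 1) :
    ((∃ p : Fin m → Fin r → ℝ, (∀ k j, 0 ≤ p k j) ∧ (∀ k, ∑ j, p k j = 1) ∧
        ∀ k ω, Pk k ω = p k (c ω) * P ω / PC (c ω)) ↔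
      (∀ k j,
        (∑ ω ∈ Finset.univ.filter (fun ω => c ω = j), Pk k ω) = 0 ∨
        (∀ ω, c ω = j →
          Pk k ω * PC j = P ω * (∑ ω' ∈ Finset.univ.filter (fun ω' => c ω' = j), Pk k ω')))) := by
  have hPCne : ∀ j, PC j ≠ 0 := fun j => (hPCpos j).ne'
  constructor
  · rintro ⟨p, hpnn, hpsum, hq⟩ k j
    right
    intro ω hω
    have hQ : (∑ ω' ∈ Finset.univ.filter (fun ω' => c ω' = j), Pk k ω') = p k j := by
      rw [Finset.sum_congr rfl (fun ω' hω' => by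
        rw [hq k ω', (Finset.mem_filter.mp hω').2])]
      rw [← Finset.sum_div, ← Finset.mul_sum, ← hPC j, mul_div_assoc,
        div_self (hPCne j), mul_one]
    rw [hQ, hq k ω, hω, div_mul_eq_mul_div, mul_div_assoc, div_self (hPCne j), mul_one]
    ring
  · intro h
    refine ⟨fun k j => ∑ ω ∈ Finset.univ.filter (fun ω => c ω = j), Pk k ω,
      fun k j => Finset.sum_nonneg (fun ω _ => hPknn k ω),
      fun k => by rw [← hPksum k]; exact Finset.sum_fiberwise _ _ _,
      fun k ω => ?_⟩
    rcases h k (c ω) with h0 | heq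
    · have hz : Pk k ω = 0 := by
        have := (Finset.sum_eq_zero_iff_of_nonneg (fun ω' _ => hPknn k ω')).mp h0 ω
          (Finset.mem_filter.mpr ⟨Finset.mem_univ _, rfl⟩)
        exact this
      simp only [hz, h0, zero_mul, zero_div]
    · have := heq ω rfl
      simp only
      rw [eq_div_iff (hPCne (c ω))]
      linarith [this]
end

section
/- For r = 2 with P(C_1) = p ∈ (0,1), P(C_2) = 1−p, and weights u(C_1), u(C_2) > 0, the quasi-perfect depth Y(α) is a continuous, strictly decreasing function of α on [0,1] (hence, by the intermediate value theorem, for any target depth value y ∈ [0, G] there is a unique α with Y(α) = y). -/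
/-!
Each cell contributes `w q A log (A / q)` with `A = 1 - α + α q`, and `A / q > α` for `α < 1`.
Differentiating, the `α log α` term exactly cancels the constant parts of the cell derivatives and
leaves `Y' α = p (1 - p) Σ_k u_k (log α - log (A_k / P(C_k))) < 0` on `(0, 1)`. Together with
`Y 1 = 0` and continuity, the intermediate value theorem gives the unique `α` for each target.
-/

open Real Set

noncomputable section

def cellDepth (w q α : ℝ) : ℝ :=
  w * q * (1 - α + α * q) * log ((1 - α + α * q) / q)

def binaryDepth (u1 u2 p α : ℝ) : ℝ :=
  cellDepth u1 p α + cellDepth u2 (1 - p) α + α * log α * (u1 * p * (1 - p) + u2 * (1 - p) * p)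

end

theorem continuous_cellDepth (w q : ℝ) : Continuous (cellDepth w q) := by
  -- `x log (x / q) = q (x / q) log (x / q)`, also when `q = 0`, and `t log t` is continuous.
  have h : cellDepth w q = fun α => w * q ^ 2 * ((1 - α + α * q) / q * log ((1 - α + α * q) / q)) := by
    funext α
    rcases eq_or_ne q 0 with rfl | hq
    · simp [cellDepth]
    · simp only [cellDepth]
      field_simp
  rw [h]
  exact continuous_const.mul (continuous_mul_log.comp (by fun_prop))

theorem cellDepth_one (w q : ℝ) : cellDepth w q 1 = 0 := by
  rcases eq_or_ne q 0 with rfl | hq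
  · simp [cellDepth]
  · simp [cellDepth, div_self hq]

theorem hasDerivAt_cellDepth (w : ℝ) {q α : ℝ} (hq : q ≠ 0) (hA : 1 - α + α * q ≠ 0) :
    HasDerivAt (cellDepth w q) (w * q * (q - 1) * (log ((1 - α + α * q) / q) + 1)) α := by
  have hlin : HasDerivAt (fun α : ℝ => 1 - α + α * q) (q - 1) α :=
    (((hasDerivAt_id α).const_sub 1).add ((hasDerivAt_id α).mul_const q)).congr_deriv (by ring)
  have hlog := (hlin.div_const q).log (div_ne_zero hA hq)
  refine ((hlin.const_mul (w * q)).mul hlog).congr_deriv ?_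
  rw [div_div_div_cancel_right₀ hq, mul_assoc _ (1 - α + α * q), mul_div_cancel₀ _ hA]
  ring

theorem continuous_binaryDepth (u1 u2 p : ℝ) : Continuous (binaryDepth u1 u2 p) :=
  ((continuous_cellDepth u1 p).add (continuous_cellDepth u2 (1 - p))).add
    (continuous_mul_log.mul continuous_const)

theorem binaryDepth_one (u1 u2 p : ℝ) : binaryDepth u1 u2 p 1 = 0 := by
  simp [binaryDepth, cellDepth_one]

theorem one_sub_add_mul_pos {q α : ℝ} (hq : 0 < q) (hα0 : 0 ≤ α) (hα1 : α ≤ 1) :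
    0 < 1 - α + α * q := by
  rcases hα1.lt_or_eq with hα1 | rfl
  · nlinarith [mul_nonneg hα0 hq.le]
  · simpa using hq

theorem log_lt_log_one_sub_add_mul_div {q α : ℝ} (hq : 0 < q) (hα0 : 0 < α) (hα1 : α < 1) :
    log α < log ((1 - α + α * q) / q) :=
  log_lt_log hα0 (by rw [lt_div_iff₀ hq]; linarith)

theorem hasDerivAt_binaryDepth (u1 u2 : ℝ) {p α : ℝ} (hp0 : 0 < p) (hp1 : p < 1)
    (hα0 : 0 < α) (hα1 : α ≤ 1) :
    HasDerivAt (binaryDepth u1 u2 p)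
      (p * (1 - p) * (u1 * (log α - log ((1 - α + α * p) / p)) +
        u2 * (log α - log ((1 - α + α * (1 - p)) / (1 - p))))) α := by
  have hq : 0 < 1 - p := by linarith
  have h1 := hasDerivAt_cellDepth u1 hp0.ne' (one_sub_add_mul_pos hp0 hα0.le hα1).ne'
  have h2 := hasDerivAt_cellDepth u2 hq.ne' (one_sub_add_mul_pos hq hα0.le hα1).ne'
  have h3 := (hasDerivAt_mul_log hα0.ne').mul_const (u1 * p * (1 - p) + u2 * (1 - p) * p)
  exact ((h1.add h2).add h3).congr_deriv (by ring)

theorem strictAntiOn_binaryDepth {u1 u2 p : ℝ} (hp0 : 0 < p) (hp1 : p < 1)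
    (hu1 : 0 < u1) (hu2 : 0 < u2) : StrictAntiOn (binaryDepth u1 u2 p) (Icc 0 1) := by
  refine strictAntiOn_of_deriv_neg (convex_Icc 0 1) (continuous_binaryDepth u1 u2 p).continuousOn ?_
  rw [interior_Icc]
  rintro α ⟨hα0, hα1⟩
  rw [(hasDerivAt_binaryDepth u1 u2 hp0 hp1 hα0 hα1.le).deriv]
  have hL1 := log_lt_log_one_sub_add_mul_div hp0 hα0 hα1
  have hL2 := log_lt_log_one_sub_add_mul_div (sub_pos.2 hp1) hα0 hα1
  refine mul_neg_of_pos_of_neg (mul_pos hp0 (sub_pos.2 hp1)) ?_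
  nlinarith

theorem StrictAntiOn.existsUnique_eq_of_continuousOn {f : ℝ → ℝ} {a b : ℝ} (hab : a ≤ b)
    (hf : ContinuousOn f (Icc a b)) (hanti : StrictAntiOn f (Icc a b)) {y : ℝ}
    (hy : y ∈ Icc (f b) (f a)) : ∃! x, x ∈ Icc a b ∧ f x = y := by
  obtain ⟨x, hx, hfx⟩ := intermediate_value_Icc' hab hf hy
  exact ⟨x, ⟨hx, hfx⟩, fun z hz => hanti.injOn hz.1 hx (hz.2.trans hfx.symm)⟩

/-- For a binary question, the quasi-perfect depth is continuous and strictly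
decreasing in the error parameter `α` on `[0,1]`; consequently every depth
value between `0` and the difficulty `G = Y 0` is attained at a unique `α`. -/
theorem quasi_perfect_depth_binary_strict_anti
    (p u1 u2 : ℝ) (hp0 : 0 < p) (hp1 : p < 1) (hu1 : 0 < u1) (hu2 : 0 < u2) :
    (let Y : ℝ → ℝ := fun α =>
      u1 * p * (1 - α + α * p) * Real.log ((1 - α + α * p) / p) +
      u2 * (1 - p) * (1 - α + α * (1 - p)) * Real.log ((1 - α + α * (1 - p)) / (1 - p)) +
      α * Real.log α * (u1 * p * (1 - p) + u2 * (1 - p) * p)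
     ContinuousOn Y (Set.Icc 0 1) ∧ StrictAntiOn Y (Set.Icc 0 1) ∧
      ∀ y ∈ Set.Icc (0 : ℝ) (Y 0), ∃! α, α ∈ Set.Icc (0 : ℝ) 1 ∧ Y α = y) := by
  show ContinuousOn (binaryDepth u1 u2 p) (Icc 0 1) ∧ StrictAntiOn (binaryDepth u1 u2 p) (Icc 0 1) ∧
    ∀ y ∈ Icc 0 (binaryDepth u1 u2 p 0), ∃! α, α ∈ Icc 0 1 ∧ binaryDepth u1 u2 p α = y
  have hcont := (continuous_binaryDepth u1 u2 p).continuousOn (s := Icc 0 1)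
  have hanti := strictAntiOn_binaryDepth hp0 hp1 hu1 hu2
  refine ⟨hcont, hanti, fun y hy => ?_⟩
  have := hanti.existsUnique_eq_of_continuousOn zero_le_one hcont (y := y)
  rw [binaryDepth_one] at this
  exact this hy
end
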